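/- If I is a Gotzmann squarefree monomial ideal of S = k[x_1,…,x_n], then for every d the family 𝒜_d = {supp(m) : m a squarefree monomial of degree d lying in I}, a family of d-element subsets of {1,…,n}, is a Gotzmann family in {1,…,n}. -/

import Mathlib

open MvPolynomial

/-- `m₁·W`: the `k`-span of `{xᵢ·w : 1 ≤ i ≤ n, w ∈ W}`. -/
noncomputable def mulVars (k : Type*) [Field k] {n : ℕ}
    (W : Submodule k (MvPolynomial (Fin n) k)) : Submodule k (MvPolynomial (Fin n) k) :=
  Submodule.span k {p : MvPolynomial (Fin n) k | ∃ i : Fin n, ∃ w ∈ W, p = X i * w}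

/-- A subspace `V ⊆ S_d` is Gotzmann if `dim m₁·V ≤ dim m₁·W` for every subspace
`W ⊆ S_d` with `dim W = dim V`. -/
def IsGotzmannSubspace (k : Type*) [Field k] (n d : ℕ)
    (V : Submodule k (MvPolynomial (Fin n) k)) : Prop :=
  V ≤ homogeneousSubmodule (Fin n) k d ∧
    ∀ W : Submodule k (MvPolynomial (Fin n) k),
      W ≤ homogeneousSubmodule (Fin n) k d →
      Module.finrank k W = Module.finrank k V →
      Module.finrank k (mulVars k V) ≤ Module.finrank k (mulVars k W)

/-- The degree-`d` component `I_d` of an ideal, as a `k`-subspace of `S_d`. -/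
noncomputable def idealComponent (k : Type*) [Field k] {n : ℕ}
    (I : Ideal (MvPolynomial (Fin n) k)) (d : ℕ) : Submodule k (MvPolynomial (Fin n) k) :=
  Submodule.restrictScalars k I ⊓ homogeneousSubmodule (Fin n) k d

/-- An ideal is Gotzmann if all of its graded components are Gotzmann subspaces. -/
def IsGotzmannIdeal {k : Type*} [Field k] {n : ℕ}
    (I : Ideal (MvPolynomial (Fin n) k)) : Prop :=
  ∀ d : ℕ, IsGotzmannSubspace k n d (idealComponent k I d)

/-- The squarefree monomial `∏_{i ∈ A} xᵢ` with support `A`. -/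
noncomputable def sqMonomial (k : Type*) [Field k] {n : ℕ} (A : Finset (Fin n)) :
    MvPolynomial (Fin n) k :=
  ∏ i ∈ A, X i

/-- A squarefree monomial ideal: an ideal generated by squarefree monomials
(equivalently, a monomial ideal whose minimal monomial generators are squarefree). -/
def IsSquarefreeMonomialIdeal {k : Type*} [Field k] {n : ℕ}
    (I : Ideal (MvPolynomial (Fin n) k)) : Prop :=
  ∃ G : Set (Finset (Fin n)), I = Ideal.span (sqMonomial k '' G)

/-- Lex comparison of exponent vectors with `x₁ > x₂ > ⋯ > xₙ`: `s` is lex-smaller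
than `t` iff at the first index where they differ, `s` has the smaller exponent. -/
def expLexLT {n : ℕ} (s t : Fin n →₀ ℕ) : Prop :=
  ∃ i : Fin n, (∀ j : Fin n, j < i → s j = t j) ∧ s i < t i

/-- A lex segment in `S_d`: the span of a set of degree-`d` monomials which is closed
under passing to lex-larger degree-`d` monomials. -/
def IsLexSegment (k : Type*) [Field k] {n : ℕ} (d : ℕ)
    (L : Submodule k (MvPolynomial (Fin n) k)) : Prop :=
  ∃ B : Set (Fin n →₀ ℕ),
    (∀ s ∈ B, (s.sum fun _ e => e) = d) ∧
    (∀ s ∈ B, ∀ t : Fin n →₀ ℕ, (t.sum fun _ e => e) = d → expLexLT s t → t ∈ B) ∧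
    L = Submodule.span k ((fun s => (monomial s (1 : k) : MvPolynomial (Fin n) k)) '' B)

/-- A monomial vector space: a subspace of `S_d` spanned by monomials of degree `d`. -/
def IsMonomialSubspace (k : Type*) [Field k] {n : ℕ} (d : ℕ)
    (V : Submodule k (MvPolynomial (Fin n) k)) : Prop :=
  ∃ B : Set (Fin n →₀ ℕ),
    (∀ s ∈ B, (s.sum fun _ e => e) = d) ∧
    V = Submodule.span k ((fun s => (monomial s (1 : k) : MvPolynomial (Fin n) k)) '' B)

/-- A homogeneous ideal: one containing all homogeneous components of its elements. -/
def IsHomogeneousIdeal {k : Type*} [Field k] {n : ℕ}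
    (I : Ideal (MvPolynomial (Fin n) k)) : Prop :=
  ∀ p ∈ I, ∀ d : ℕ, (homogeneousComponent d p) ∈ I

/-- A lex ideal: each graded component is a lex segment. -/
def IsLexIdeal (k : Type*) [Field k] {n : ℕ}
    (I : Ideal (MvPolynomial (Fin n) k)) : Prop :=
  ∀ d : ℕ, IsLexSegment k d (idealComponent k I d)

/-- `A` lex-precedes `B`, as squarefree monomials with `x₁ > x₂ > ⋯ > xₙ`: the
least element of the symmetric difference `A Δ B` lies in `A`. -/
def finsetLexLT {n : ℕ} (A B : Finset (Fin n)) : Prop :=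
  ∃ i ∈ A, i ∉ B ∧ ∀ j : Fin n, j < i → (j ∈ A ↔ j ∈ B)

/-- `L` is the squarefree lexification of `I`: `L` is a squarefree monomial ideal and,
in each degree `d`, the squarefree degree-`d` monomials in `L` form an initial segment
in lex order whose cardinality is the number of squarefree degree-`d` monomials in `I`. -/
def IsSquarefreeLexification (k : Type*) [Field k] {n : ℕ}
    (I L : Ideal (MvPolynomial (Fin n) k)) : Prop :=
  IsSquarefreeMonomialIdeal L ∧
    ∀ d : ℕ,
      (∀ B : Finset (Fin n), B.card = d → sqMonomial k B ∈ L →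
        ∀ A : Finset (Fin n), A.card = d → finsetLexLT A B → sqMonomial k A ∈ L) ∧
      {A : Finset (Fin n) | A.card = d ∧ sqMonomial k A ∈ L}.ncard
        = {A : Finset (Fin n) | A.card = d ∧ sqMonomial k A ∈ I}.ncard

/-- `A` is the support of a minimal monomial generator of the squarefree monomial
ideal `I`: the monomial `x_A` lies in `I` but no proper divisor of it does. -/
def IsMinimalSqGenerator {k : Type*} [Field k] {n : ℕ}
    (I : Ideal (MvPolynomial (Fin n) k)) (A : Finset (Fin n)) : Prop :=
  sqMonomial k A ∈ I ∧ ∀ B : Finset (Fin n), B ⊂ A → sqMonomial k B ∉ I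

/-- The upper shadow `∂⁺𝒜 = {A ∪ {x} : A ∈ 𝒜, x ∈ X \ A}` of a family of finite
sets, taken within the ground set `X`. -/
def upShadowIn {α : Type*} [DecidableEq α] (X : Finset α) (𝒜 : Set (Finset α)) :
    Set (Finset α) :=
  {B | ∃ A ∈ 𝒜, ∃ x ∈ X, x ∉ A ∧ B = insert x A}

/-- A Gotzmann family of `d`-element subsets of the ground set `X`: its upper shadow
(in `X`) is no larger than that of any other family of `d`-element subsets of `X` of
the same cardinality. -/
def IsGotzmannFamily {α : Type*} [DecidableEq α] (X : Finset α) (d : ℕ)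
    (𝒜 : Set (Finset α)) : Prop :=
  (∀ A ∈ 𝒜, A ⊆ X ∧ A.card = d) ∧
    ∀ ℬ : Set (Finset α), (∀ B ∈ ℬ, B ⊆ X ∧ B.card = d) → ℬ.ncard = 𝒜.ncard →
      (upShadowIn X 𝒜).ncard ≤ (upShadowIn X ℬ).ncard

/-- First part `𝒜₀ = {A ∈ 𝒜 : i ∉ A}` of the `i`-decomposition of `𝒜`. -/
def decompZero {α : Type*} (i : α) (𝒜 : Set (Finset α)) : Set (Finset α) :=
  {A ∈ 𝒜 | i ∉ A}

/-- Second part `𝒜₁ = {A \ {i} : A ∈ 𝒜, i ∈ A}` of the `i`-decomposition of `𝒜`. -/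
def decompOne {α : Type*} [DecidableEq α] (i : α) (𝒜 : Set (Finset α)) : Set (Finset α) :=
  {B | ∃ A ∈ 𝒜, i ∈ A ∧ B = A.erase i}

/-- `A` precedes `B` in the lex order on finite sets induced by the strict order `r`:
the `r`-least element of the symmetric difference `A Δ B` lies in `A`. -/
def lexLT {α : Type*} (r : α → α → Prop) (A B : Finset α) : Prop :=
  ∃ x ∈ A, x ∉ B ∧ ∀ y, r y x → (y ∈ A ↔ y ∈ B)

/-- `r` is a strict linear order on the elements of `Y`. -/
def IsLinearOrderOn {α : Type*} (r : α → α → Prop) (Y : Finset α) : Prop :=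
  (∀ a ∈ Y, ¬ r a a) ∧
    (∀ a ∈ Y, ∀ b ∈ Y, ∀ c ∈ Y, r a b → r b c → r a c) ∧
    (∀ a ∈ Y, ∀ b ∈ Y, a ≠ b → r a b ∨ r b a)

/-- A lex segment: a family of `e`-element subsets of `Y` that is an initial segment
of the lex order (induced by the strict order `r`) on `e`-element subsets of `Y`. -/
def IsLexSegmentFamily {α : Type*} (r : α → α → Prop) (Y : Finset α) (e : ℕ)
    (L : Set (Finset α)) : Prop :=
  (∀ B ∈ L, B ⊆ Y ∧ B.card = e) ∧
    ∀ B ∈ L, ∀ A : Finset α, A ⊆ Y → A.card = e → lexLT r A B → A ∈ L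

/-- The Alexander dual `𝒜^∨ = {X \ A : A ⊆ X, |A| = d, A ∉ 𝒜}` of a family `𝒜` of
`d`-element subsets of `X`. -/
def alexDual {α : Type*} [DecidableEq α] (X : Finset α) (d : ℕ) (𝒜 : Set (Finset α)) :
    Set (Finset α) :=
  {B | ∃ A : Finset α, A ⊆ X ∧ A.card = d ∧ A ∉ 𝒜 ∧ B = X \ A}

/-- A family of `d`-element subsets of `X` is dual-Gotzmann if its Alexander dual is
Gotzmann in `X`. -/
def IsDualGotzmann {α : Type*} [DecidableEq α] (X : Finset α) (d : ℕ)
    (𝒜 : Set (Finset α)) : Prop :=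
  IsGotzmannFamily X (X.card - d) (alexDual X d 𝒜)

/-!
The supports of the squarefree monomials of degree at most `d` in `I` form a family `D` that is
closed under adding an element as long as the size stays at most `d`, and `I_d` is spanned by
the degree-`d` monomials whose support lies in `D`. For any such family, `m₁` of this span is
spanned by the degree-`(d+1)` monomials supported on `D` together with the squarefree monomials
`x_B`, `B ∈ ∂⁺D_d`; and the number of degree-`m` monomials supported on a family only depends on
the sizes of its slices.

Replacing each slice `D_e` by the complements of a colex initial segment of the same size gives,
by the Kruskal–Katona theorem, a family `D'` of the same kind whose top slice has the least
possible upper shadow. The span `W` of the degree-`d` monomials supported on `D'` has the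
dimension of `I_d`, so the Gotzmann inequality `dim m₁I_d ≤ dim m₁W` reduces to
`|∂⁺D_d| ≤ |∂⁺D'_d|`.
-/

open Finset
open scoped FinsetFamily Pointwise

namespace Finset

variable {σ : Type*} [DecidableEq σ]

lemma toFinsupp_val_apply (A : Finset σ) (i : σ) :
    A.val.toFinsupp i = if i ∈ A then 1 else 0 :=
  Multiset.count_eq_of_nodup A.nodup

lemma support_toFinsupp_val (A : Finset σ) : A.val.toFinsupp.support = A := by
  simp

lemma degree_toFinsupp_val (A : Finset σ) : A.val.toFinsupp.degree = #A := by
  simp [Finsupp.degree_apply]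

lemma toFinsupp_val_le_iff {A : Finset σ} {t : σ →₀ ℕ} :
    A.val.toFinsupp ≤ t ↔ A ⊆ t.support := by
  simp only [Finsupp.le_def, toFinsupp_val_apply, subset_iff, Finsupp.mem_support_iff]
  refine forall_congr' fun i => ?_
  split_ifs <;> simp [Nat.one_le_iff_ne_zero, *]

lemma toFinsupp_val_insert {A : Finset σ} {a : σ} (ha : a ∉ A) :
    (insert a A).val.toFinsupp = Finsupp.single a 1 + A.val.toFinsupp := by
  rw [insert_val_of_notMem ha, ← Multiset.singleton_add, Multiset.toFinsupp_add,
    Multiset.toFinsupp_singleton]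

lemma sum_eq_sum_of_card_slice_eq {α M : Type*} [Fintype α] [AddCommMonoid M]
    {E F : Finset (Finset α)} {f : Finset α → M} (hf : ∀ S T, #S = #T → f S = f T)
    (h : ∀ r, #(E # r) = #(F # r)) : ∑ S ∈ E, f S = ∑ S ∈ F, f S := by
  have hslices (G : Finset (Finset α)) :
      ∑ S ∈ G, f S = ∑ r ∈ Iic (Fintype.card α), ∑ S ∈ G # r, f S :=
    (sum_fiberwise_of_maps_to (fun S _ => mem_Iic.2 S.card_le_univ) f).symm
  rw [hslices, hslices]
  refine sum_congr rfl fun r _ => ?_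
  obtain hE | ⟨S₀, hS₀⟩ := (E # r).eq_empty_or_nonempty
  · rw [hE, eq_comm, card_eq_zero.1 ((h r).symm.trans (by rw [hE, card_empty]))]
  · have hconst (G : Finset (Finset α)) : ∑ S ∈ G # r, f S = #(G # r) • f S₀ :=
      sum_eq_card_nsmul fun S hS => hf S S₀ ((sized_slice hS).trans (sized_slice hS₀).symm)
    rw [hconst, hconst, h]

end Finset

namespace Finsupp

variable {σ : Type*}

lemma card_support_le_degree (t : σ →₀ ℕ) : #t.support ≤ t.degree := by
  rw [degree_apply, card_eq_sum_ones]
  exact Finset.sum_le_sum fun i hi => Nat.one_le_iff_ne_zero.2 (mem_support_iff.1 hi)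

lemma exists_two_le_of_card_support_lt_degree {t : σ →₀ ℕ} (h : #t.support < t.degree) :
    ∃ i, 2 ≤ t i := by
  by_contra! hle
  rw [degree_apply, card_eq_sum_ones] at h
  exact h.not_ge (Finset.sum_le_sum fun i _ => Nat.le_of_lt_succ (hle i))

variable [DecidableEq σ]

lemma eq_toFinsupp_val_support {t : σ →₀ ℕ} (h : t.degree = #t.support) :
    t = t.support.val.toFinsupp := by
  have hle : ∀ i ∈ t.support, 1 ≤ t i := fun i hi =>
    Nat.one_le_iff_ne_zero.2 (mem_support_iff.1 hi)
  rw [degree_apply, card_eq_sum_ones, eq_comm, Finset.sum_eq_sum_iff_of_le hle] at h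
  ext i
  rw [Finset.toFinsupp_val_apply]
  split_ifs with hi
  · exact (h i hi).symm
  · exact notMem_support_iff.1 hi

lemma support_single_one_add (i : σ) (u : σ →₀ ℕ) :
    (single i 1 + u).support = insert i u.support := by
  rw [support_add_eq_union, support_single _ one_ne_zero, insert_eq]

lemma exists_eq_single_add_of_two_le {t : σ →₀ ℕ} {i : σ} (hi : 2 ≤ t i) :
    ∃ u, t = single i 1 + u ∧ u.support = t.support := by
  have hle : single i 1 ≤ t := by
    rw [single_le_iff]
    omega
  refine ⟨t - single i 1, (add_tsub_cancel_of_le hle).symm, ?_⟩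
  ext j
  simp only [mem_support_iff, tsub_apply, single_apply]
  split_ifs with hj <;> [subst hj; skip] <;> omega

end Finsupp

section TruncatedUpperSet

variable {α : Type*} [DecidableEq α]

def IsTruncatedUpperSet (d : ℕ) (D : Finset (Finset α)) : Prop :=
  (∀ S ∈ D, #S ≤ d) ∧ ∀ S ∈ D, ∀ a ∉ S, #S < d → insert a S ∈ D

lemma IsTruncatedUpperSet.upShadow_slice_subset [Fintype α] {d e : ℕ} {D : Finset (Finset α)}
    (hD : IsTruncatedUpperSet d D) (he : e < d) : ∂⁺ (D # e) ⊆ D # (e + 1) := by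
  intro T hT
  obtain ⟨S, hS, a, ha, rfl⟩ := mem_upShadow_iff.1 hT
  rw [mem_slice] at hS ⊢
  rw [card_insert_of_notMem ha, hS.2]
  exact ⟨hD.2 S hS.1 a ha (hS.2 ▸ he), rfl⟩

variable {U : ℕ → Finset (Finset α)} {d : ℕ}

lemma mem_biUnion_range_iff (hU : ∀ e, (U e : Set (Finset α)).Sized e) {S : Finset α} :
    S ∈ (range (d + 1)).biUnion U ↔ #S ≤ d ∧ S ∈ U #S := by
  simp only [mem_biUnion, mem_range, Nat.lt_succ_iff]
  exact ⟨fun ⟨e, he, hS⟩ => hU e hS ▸ ⟨he, hS⟩, fun h => ⟨_, h⟩⟩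

lemma slice_biUnion_range (hU : ∀ e, (U e : Set (Finset α)).Sized e) (e : ℕ) :
    ((range (d + 1)).biUnion U) # e = if e ≤ d then U e else ∅ := by
  ext S
  split_ifs with he
  · rw [mem_slice, mem_biUnion_range_iff hU]
    exact ⟨fun ⟨⟨_, hS⟩, rfl⟩ => hS, fun hS => by rw [hU e hS]; exact ⟨⟨he, hS⟩, rfl⟩⟩
  · simp only [mem_slice, mem_biUnion_range_iff hU, notMem_empty, iff_false]
    omega

lemma isTruncatedUpperSet_biUnion_range [Fintype α] (hU : ∀ e, (U e : Set (Finset α)).Sized e)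
    (hchain : ∀ e < d, ∂⁺ (U e) ⊆ U (e + 1)) :
    IsTruncatedUpperSet d ((range (d + 1)).biUnion U) := by
  refine ⟨fun S hS => ((mem_biUnion_range_iff hU).1 hS).1, fun S hS a ha hlt => ?_⟩
  have hins := hchain _ hlt (insert_mem_upShadow ((mem_biUnion_range_iff hU).1 hS).2 ha)
  rw [mem_biUnion_range_iff hU, card_insert_of_notMem ha]
  exact ⟨hlt, hins⟩

end TruncatedUpperSet

section SupportedExps

variable {σ : Type*} [DecidableEq σ] [Fintype σ]

noncomputable def supportedExps (E : Finset (Finset σ)) (m : ℕ) : Finset (σ →₀ ℕ) :=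
  {t ∈ finsuppAntidiag univ m | t.support ∈ E}

lemma mem_supportedExps {E : Finset (Finset σ)} {m : ℕ} {t : σ →₀ ℕ} :
    t ∈ supportedExps E m ↔ t.degree = m ∧ t.support ∈ E := by
  rw [supportedExps, mem_filter, mem_finsuppAntidiag']
  exact ⟨fun h => ⟨h.1.1, h.2⟩, fun h => ⟨⟨h.1, subset_univ _⟩, h.2⟩⟩

lemma card_supportedExps_singleton_congr {S T : Finset σ} (h : #S = #T) (m : ℕ) :
    #(supportedExps {S} m) = #(supportedExps {T} m) := by
  let π := (equivOfCardEq h).extendSubtype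
  have hπ : S.map π.toEmbedding = T :=
    eq_of_subset_of_card_le (fun _ hy => by
        obtain ⟨x, hx, rfl⟩ := mem_map.1 hy
        exact (equivOfCardEq h).extendSubtype_mem x hx)
      (by rw [card_map, h])
  have hdeg (ρ : Equiv.Perm σ) (t : σ →₀ ℕ) : (t.equivMapDomain ρ).degree = t.degree := by
    rw [Finsupp.equivMapDomain_eq_mapDomain, Finsupp.degree_mapDomain]
  have hsupp (ρ : Equiv.Perm σ) (t : σ →₀ ℕ) :
      (t.equivMapDomain ρ).support = t.support.map ρ.toEmbedding := rfl
  refine card_nbij' (Finsupp.equivMapDomain π) (Finsupp.equivMapDomain π.symm) ?_ ?_ ?_ ?_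
  · intro t ht
    simp only [mem_coe, mem_supportedExps, mem_singleton] at ht ⊢
    rw [hdeg, hsupp, ht.2, hπ]
    exact ⟨ht.1, rfl⟩
  · intro t ht
    simp only [mem_coe, mem_supportedExps, mem_singleton] at ht ⊢
    rw [hdeg, hsupp, ht.2, ← hπ, map_map]
    exact ⟨ht.1, by simp⟩
  · intro t _
    simp [← Finsupp.equivMapDomain_trans]
  · intro t _
    simp [← Finsupp.equivMapDomain_trans]

lemma card_supportedExps_eq_sum (E : Finset (Finset σ)) (m : ℕ) :
    #(supportedExps E m) = ∑ S ∈ E, #(supportedExps {S} m) := by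
  rw [card_eq_sum_card_fiberwise fun t ht => (mem_supportedExps.1 ht).2]
  refine sum_congr rfl fun S _ => congrArg card (ext fun t => ?_)
  simp only [mem_filter, mem_supportedExps, mem_singleton]
  exact ⟨fun h => ⟨h.1.1, h.2⟩, fun h => ⟨⟨h.1, h.2 ▸ ‹_›⟩, h.2⟩⟩

lemma card_supportedExps_eq_of_card_slice_eq {E F : Finset (Finset σ)}
    (h : ∀ r, #(E # r) = #(F # r)) (m : ℕ) :
    #(supportedExps E m) = #(supportedExps F m) := by
  rw [card_supportedExps_eq_sum, card_supportedExps_eq_sum]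
  exact sum_eq_sum_of_card_slice_eq (fun S T hST => card_supportedExps_singleton_congr hST m) h

lemma supportedExps_union (E F : Finset (Finset σ)) (m : ℕ) :
    supportedExps (E ∪ F) m = supportedExps E m ∪ supportedExps F m := by
  simp only [supportedExps, mem_union, filter_or]

lemma disjoint_supportedExps {E F : Finset (Finset σ)} (h : Disjoint E F) (m : ℕ) :
    Disjoint (supportedExps E m) (supportedExps F m) :=
  disjoint_filter_filter' _ _ fun _ hE hF t ht => disjoint_left.1 h (hE t ht) (hF t ht)

lemma card_supportedExps_of_sized {E : Finset (Finset σ)} {m : ℕ}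
    (hE : (E : Set (Finset σ)).Sized m) : #(supportedExps E m) = #E := by
  refine card_nbij' Finsupp.support (fun S => S.val.toFinsupp)
    (fun t ht => (mem_supportedExps.1 ht).2)
    (fun S hS => mem_supportedExps.2 ⟨(degree_toFinsupp_val S).trans (hE hS),
      by rwa [support_toFinsupp_val]⟩) (fun t ht => ?_)
    (fun S _ => support_toFinsupp_val S)
  obtain ⟨hdeg, hsupp⟩ := mem_supportedExps.1 ht
  exact (Finsupp.eq_toFinsupp_val_support (hdeg.trans (hE hsupp).symm)).symm

variable {d : ℕ} {D : Finset (Finset σ)}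

lemma IsTruncatedUpperSet.range_single_add_supportedExps (hD : IsTruncatedUpperSet d D) :
    Set.range (fun i => Finsupp.single i 1) + (supportedExps D d : Set (σ →₀ ℕ)) =
      (supportedExps (D ∪ ∂⁺ (D # d)) (d + 1) : Set (σ →₀ ℕ)) := by
  ext t
  simp only [Set.mem_add, Set.mem_range, mem_coe, mem_supportedExps, mem_union]
  constructor
  · rintro ⟨_, ⟨i, rfl⟩, u, ⟨hdeg, hu⟩, rfl⟩
    rw [map_add, Finsupp.degree_single, hdeg, add_comm, Finsupp.support_single_one_add]
    refine ⟨rfl, ?_⟩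
    by_cases hi : i ∈ u.support
    · exact Or.inl (by rwa [insert_eq_of_mem hi])
    rcases (hD.1 _ hu).lt_or_eq with hlt | heq
    · exact Or.inl (hD.2 _ hu i hi hlt)
    · exact Or.inr (insert_mem_upShadow (mem_slice.2 ⟨hu, heq⟩) hi)
  · rintro ⟨hdeg, htD | htsh⟩
    · obtain ⟨i, hi⟩ := Finsupp.exists_two_le_of_card_support_lt_degree
        (by rw [hdeg]; exact Nat.lt_succ_of_le (hD.1 _ htD))
      obtain ⟨u, rfl, hu⟩ := Finsupp.exists_eq_single_add_of_two_le hi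
      rw [map_add, Finsupp.degree_single] at hdeg
      exact ⟨_, ⟨i, rfl⟩, u, ⟨by omega, hu ▸ htD⟩, rfl⟩
    · obtain ⟨S, hS, a, ha, hSa⟩ := mem_upShadow_iff.1 htsh
      rw [mem_slice] at hS
      have ht : t = Finsupp.single a 1 + S.val.toFinsupp := by
        rw [← toFinsupp_val_insert ha, hSa]
        apply Finsupp.eq_toFinsupp_val_support
        rw [hdeg, ← hSa, card_insert_of_notMem ha, hS.2]
      refine ⟨_, ⟨a, rfl⟩, _, ⟨?_, ?_⟩, ht.symm⟩
      · rw [degree_toFinsupp_val, hS.2]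
      · rw [support_toFinsupp_val]
        exact hS.1

lemma IsTruncatedUpperSet.card_supportedExps_union_upShadow (hD : IsTruncatedUpperSet d D) :
    #(supportedExps (D ∪ ∂⁺ (D # d)) (d + 1)) = #(supportedExps D (d + 1)) + #(∂⁺ (D # d)) := by
  rw [supportedExps_union, card_union_of_disjoint,
    card_supportedExps_of_sized sized_slice.upShadow]
  refine disjoint_supportedExps (disjoint_left.2 fun S hS hS' => ?_) _
  have := hD.1 S hS
  have := sized_slice.upShadow hS'
  omega

end SupportedExps

namespace Finset.Colex

variable {α : Type*} [LinearOrder α]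

lemma IsInitSeg.subset_of_card_le {𝒜 ℬ : Finset (Finset α)} {r : ℕ} (h𝒜 : IsInitSeg 𝒜 r)
    (hℬ : IsInitSeg ℬ r) (hcard : #𝒜 ≤ #ℬ) : 𝒜 ⊆ ℬ :=
  (h𝒜.total hℬ).elim id fun h => (eq_of_subset_of_card_le h hcard).ge

lemma exists_isInitSeg_card [Fintype α] (r : ℕ) {c : ℕ}
    (hc : c ≤ (Fintype.card α).choose r) :
    ∃ 𝒞 : Finset (Finset α), IsInitSeg 𝒞 r ∧ #𝒞 = c := by
  induction c with
  | zero => exact ⟨∅, isInitSeg_empty, rfl⟩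
  | succ c ih =>
    obtain ⟨𝒞, h𝒞, rfl⟩ := ih (by omega)
    have hrest : (powersetCard r univ \ 𝒞).Nonempty := by
      refine sdiff_nonempty.2 fun hsub => ?_
      have := card_le_card hsub
      rw [card_powersetCard, card_univ] at this
      omega
    -- adding the colex-least `r`-set outside `𝒞` keeps it an initial segment
    obtain ⟨s, hs, hmin⟩ := exists_min_image _ toColex hrest
    rw [mem_sdiff, mem_powersetCard_univ] at hs
    refine ⟨insert s 𝒞, ⟨?_, ?_⟩, card_insert_of_notMem hs.2⟩
    · intro u hu
      rw [coe_insert, Set.mem_insert_iff] at hu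
      rcases hu with rfl | hu
      exacts [hs.1, h𝒞.1 hu]
    · intro u t hu ht
      rw [mem_insert] at hu ⊢
      rcases hu with rfl | hu
      · by_contra! htC
        exact not_le_of_gt ht.1 (hmin t (mem_sdiff.2 ⟨mem_powersetCard_univ.2 ht.2, htC.2⟩))
      · exact Or.inr (h𝒞.2 hu ht)

end Finset.Colex

open Finset.Colex

section KruskalKatona

variable {n : ℕ}

theorem kruskal_katona_upShadow {r : ℕ} {ℬ 𝒞 : Finset (Finset (Fin n))}
    (hℬ : (ℬ : Set (Finset (Fin n))).Sized r) (h𝒞 : IsInitSeg 𝒞 (n - r)) (hcard : #𝒞 ≤ #ℬ) :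
    #(∂⁺ 𝒞ᶜˢ) ≤ #(∂⁺ ℬ) := by
  have hℬc : (ℬᶜˢ : Set (Finset (Fin n))).Sized (n - r) := by
    simpa using hℬ.compls
  rw [upShadow_compls, card_compls, ← card_compls (∂⁺ ℬ), ← shadow_compls]
  exact kruskal_katona hℬc (by rwa [card_compls]) h𝒞

lemma IsTruncatedUpperSet.exists_colex_chain {d : ℕ} {D : Finset (Finset (Fin n))}
    (hD : IsTruncatedUpperSet d D) :
    ∃ U : ℕ → Finset (Finset (Fin n)), (∀ e, (U e : Set (Finset (Fin n))).Sized e) ∧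
      (∀ e, #(U e) = #(D # e)) ∧ (∀ e < d, ∂⁺ (U e) ⊆ U (e + 1)) ∧
      ∀ ℬ : Finset (Finset (Fin n)), (ℬ : Set (Finset (Fin n))).Sized d → #(D # d) ≤ #ℬ →
        #(∂⁺ (U d)) ≤ #(∂⁺ ℬ) := by
  have hslice_le e : #(D # e) ≤ n.choose e := by
    simpa using (sized_slice (𝒜 := D) (r := e)).card_le
  have hslice_le_symm e : #(D # e) ≤ (Fintype.card (Fin n)).choose (n - e) := by
    rcases le_or_gt e n with he | he
    · rw [Fintype.card_fin, Nat.choose_symm he]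
      exact hslice_le e
    · have := hslice_le e
      rw [Nat.choose_eq_zero_of_lt he] at this
      omega
  choose 𝒞 h𝒞 h𝒞card using fun e => exists_isInitSeg_card (n - e) (hslice_le_symm e)
  refine ⟨fun e => (𝒞 e)ᶜˢ, fun e => ?_, fun e => by rw [card_compls, h𝒞card], fun e he => ?_,
    fun ℬ hℬ hcard => kruskal_katona_upShadow hℬ (h𝒞 d) ((h𝒞card d).trans_le hcard)⟩
  · rcases le_or_gt e n with he | he
    · exact (sized_compls (by simpa using he)).2 (by simpa using (h𝒞 e).1)
    · have hle := hslice_le e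
      rw [Nat.choose_eq_zero_of_lt he, ← h𝒞card, Nat.le_zero, card_eq_zero] at hle
      simp [hle]
  -- Kruskal–Katona makes the compressed slices nested under the upper shadow.
  have hinit : IsInitSeg (∂ (𝒞 e)) (n - (e + 1)) := by
    simpa [Nat.sub_sub] using (h𝒞 e).shadow
  have hcard : #(∂ (𝒞 e)) ≤ #(𝒞 (e + 1)) :=
    calc #(∂ (𝒞 e)) = #(∂⁺ (𝒞 e)ᶜˢ) := by rw [upShadow_compls, card_compls]
      _ ≤ #(∂⁺ (D # e)) := kruskal_katona_upShadow sized_slice (h𝒞 e) (h𝒞card e).le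
      _ ≤ #(D # (e + 1)) := card_le_card (hD.upShadow_slice_subset he)
      _ = #(𝒞 (e + 1)) := (h𝒞card _).symm
  rw [upShadow_compls, compls_subset_compls]
  exact hinit.subset_of_card_le (h𝒞 (e + 1)) hcard

lemma IsTruncatedUpperSet.exists_upShadow_minimal {d : ℕ} {D : Finset (Finset (Fin n))}
    (hD : IsTruncatedUpperSet d D) :
    ∃ D' : Finset (Finset (Fin n)), IsTruncatedUpperSet d D' ∧ (∀ e, #(D' # e) = #(D # e)) ∧
      ∀ ℬ : Finset (Finset (Fin n)), (ℬ : Set (Finset (Fin n))).Sized d → #(D # d) ≤ #ℬ →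
        #(∂⁺ (D' # d)) ≤ #(∂⁺ ℬ) := by
  obtain ⟨U, hU_sized, hU_card, hU_chain, hU_min⟩ := hD.exists_colex_chain
  refine ⟨_, isTruncatedUpperSet_biUnion_range hU_sized hU_chain, fun e => ?_, fun ℬ hℬ hcard => ?_⟩
  · rw [slice_biUnion_range hU_sized]
    split_ifs with he
    · exact hU_card e
    · rw [card_empty, eq_comm, card_eq_zero, eq_empty_iff_forall_notMem]
      intro S hS
      rw [mem_slice] at hS
      exact he (hS.2 ▸ hD.1 S hS.1)
  · rw [slice_biUnion_range hU_sized, if_pos le_rfl]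
    exact hU_min ℬ hℬ hcard

end KruskalKatona

lemma upShadowIn_univ {α : Type*} [DecidableEq α] [Fintype α] (𝒜 : Finset (Finset α)) :
    upShadowIn univ (𝒜 : Set (Finset α)) = ↑(∂⁺ 𝒜) := by
  ext B
  simp [upShadowIn, mem_upShadow_iff, eq_comm]

namespace MvPolynomial

variable {R σ : Type*} [CommSemiring R]

lemma finrank_restrictSupport [StrongRankCondition R] (T : Finset (σ →₀ ℕ)) :
    Module.finrank R (restrictSupport R (T : Set (σ →₀ ℕ))) = #T := by
  rw [Module.finrank_eq_card_basis (basisRestrictSupport R _)]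
  simp

lemma restrictSupport_inf (s t : Set (σ →₀ ℕ)) :
    restrictSupport R s ⊓ restrictSupport R t = restrictSupport R (s ∩ t) := by
  ext p
  simp only [Submodule.mem_inf, mem_restrictSupport_iff, Set.subset_inter_iff]

lemma restrictScalars_span_monomial (S : Set (σ →₀ ℕ)) :
    (Ideal.span ((monomial · (1 : R)) '' S)).restrictScalars R =
      restrictSupport R {t | ∃ s ∈ S, s ≤ t} := by
  ext p
  rw [Submodule.restrictScalars_mem, mem_ideal_span_monomial_image, mem_restrictSupport_iff]
  rfl

lemma homogeneousSubmodule_eq_restrictSupport (d : ℕ) :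
    homogeneousSubmodule σ R d = restrictSupport R {t | t.degree = d} :=
  homogeneousSubmodule_eq_finsupp_supported σ R d

end MvPolynomial

section GotzmannSquarefree

variable {k : Type*} [Field k] {n : ℕ}

lemma mulVars_eq_span_range_X_mul (V : Submodule k (MvPolynomial (Fin n) k)) :
    mulVars k V = Submodule.span k (Set.range X) * V := by
  conv_rhs => rw [← Submodule.span_eq V]
  rw [Submodule.span_mul_span, mulVars]
  congr 1
  ext p
  simp [Set.mem_mul, eq_comm]

lemma mulVars_restrictSupport (s : Set (Fin n →₀ ℕ)) :
    mulVars k (restrictSupport k s) =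
      restrictSupport k (Set.range (fun i => Finsupp.single i 1) + s) := by
  rw [restrictSupport_add, mulVars_eq_span_range_X_mul, restrictSupport_eq_span (R := k)
    (Set.range _), ← Set.range_comp]
  rfl

lemma sqMonomial_eq_monomial (A : Finset (Fin n)) :
    sqMonomial k A = monomial A.val.toFinsupp 1 := by
  rw [← prod_X_pow_eq_monomial, support_toFinsupp_val, sqMonomial]
  exact prod_congr rfl fun i hi => by rw [toFinsupp_val_apply, if_pos hi, pow_one]

lemma IsSquarefreeMonomialIdeal.restrictScalars_eq {I : Ideal (MvPolynomial (Fin n) k)}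
    (hI : IsSquarefreeMonomialIdeal I) :
    I.restrictScalars k = restrictSupport k {t | sqMonomial k t.support ∈ I} := by
  obtain ⟨G, rfl⟩ := hI
  have hG : sqMonomial k '' G = (monomial · 1) '' ((fun B => B.val.toFinsupp) '' G) := by
    rw [Set.image_image]
    exact Set.image_congr fun B _ => sqMonomial_eq_monomial B
  rw [hG, restrictScalars_span_monomial]
  congr 1
  ext t
  rw [Set.mem_ofPred_eq, Set.mem_ofPred_eq, sqMonomial_eq_monomial,
    ← Submodule.restrictScalars_mem k, restrictScalars_span_monomial, monomial_mem_restrictSupport]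
  simp [toFinsupp_val_le_iff]

open Classical in
noncomputable def sqSupportsUpTo (k : Type*) [Field k] {n : ℕ}
    (I : Ideal (MvPolynomial (Fin n) k)) (d : ℕ) : Finset (Finset (Fin n)) :=
  {S | #S ≤ d ∧ sqMonomial k S ∈ I}

variable {I : Ideal (MvPolynomial (Fin n) k)} {d : ℕ}

lemma mem_sqSupportsUpTo {S : Finset (Fin n)} :
    S ∈ sqSupportsUpTo k I d ↔ #S ≤ d ∧ sqMonomial k S ∈ I := by
  simp [sqSupportsUpTo]

lemma coe_sqSupportsUpTo_slice :
    (((sqSupportsUpTo k I d) # d : Finset (Finset (Fin n))) : Set (Finset (Fin n))) =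
      {A | #A = d ∧ sqMonomial k A ∈ I} := by
  ext A
  simp only [mem_coe, mem_slice, mem_sqSupportsUpTo, Set.mem_ofPred_eq]
  exact ⟨fun h => ⟨h.2, h.1.2⟩, fun h => ⟨⟨h.1.le, h.2⟩, h.1⟩⟩

lemma isTruncatedUpperSet_sqSupportsUpTo (I : Ideal (MvPolynomial (Fin n) k)) (d : ℕ) :
    IsTruncatedUpperSet d (sqSupportsUpTo k I d) := by
  refine ⟨fun S hS => (mem_sqSupportsUpTo.1 hS).1, fun S hS a ha hlt => ?_⟩
  rw [mem_sqSupportsUpTo] at hS ⊢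
  refine ⟨by rw [card_insert_of_notMem ha]; omega, ?_⟩
  rw [sqMonomial, prod_insert ha]
  exact I.mul_mem_left _ hS.2

lemma IsSquarefreeMonomialIdeal.idealComponent_eq (hI : IsSquarefreeMonomialIdeal I) (d : ℕ) :
    idealComponent k I d = restrictSupport k (supportedExps (sqSupportsUpTo k I d) d) := by
  rw [idealComponent, hI.restrictScalars_eq, homogeneousSubmodule_eq_restrictSupport,
    restrictSupport_inf]
  congr 1
  ext t
  simp only [Set.mem_inter_iff, Set.mem_ofPred_eq, mem_coe, mem_supportedExps, mem_sqSupportsUpTo]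
  constructor
  · rintro ⟨hI, rfl⟩
    exact ⟨rfl, t.card_support_le_degree, hI⟩
  · rintro ⟨rfl, -, hI⟩
    exact ⟨hI, rfl⟩

lemma IsSquarefreeMonomialIdeal.card_upShadow_le (hI : IsSquarefreeMonomialIdeal I)
    (hG : IsGotzmannSubspace k n d (idealComponent k I d)) {D' : Finset (Finset (Fin n))}
    (hD' : IsTruncatedUpperSet d D') (hslices : ∀ e, #(D' # e) = #((sqSupportsUpTo k I d) # e)) :
    #(∂⁺ ((sqSupportsUpTo k I d) # d)) ≤ #(∂⁺ (D' # d)) := by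
  have hD := isTruncatedUpperSet_sqSupportsUpTo I d
  have hW : restrictSupport k (supportedExps D' d : Set (Fin n →₀ ℕ)) ≤
      homogeneousSubmodule (Fin n) k d := by
    rw [homogeneousSubmodule_eq_restrictSupport]
    exact restrictSupport_mono (R := k) fun t ht => (mem_supportedExps.1 ht).1
  have hgot := hG.2 _ hW (by
    rw [hI.idealComponent_eq, finrank_restrictSupport, finrank_restrictSupport,
      card_supportedExps_eq_of_card_slice_eq hslices])
  -- both sides count the degree-`(d+1)` monomials supported on the family, which agree,
  -- plus the upper shadow of its top slice
  rw [hI.idealComponent_eq, mulVars_restrictSupport, mulVars_restrictSupport,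
    hD.range_single_add_supportedExps, hD'.range_single_add_supportedExps,
    finrank_restrictSupport, finrank_restrictSupport, hD.card_supportedExps_union_upShadow,
    hD'.card_supportedExps_union_upShadow, card_supportedExps_eq_of_card_slice_eq hslices] at hgot
  omega

end GotzmannSquarefree

/-- **Proposition.** If `I` is a Gotzmann squarefree monomial ideal of
`S = k[x₁,…,xₙ]`, then for every `d` the family of supports of the squarefree
degree-`d` monomials lying in `I` is a Gotzmann family of `d`-element subsets of
`{1,…,n}`. -/
theorem gotzmann_ideal_gives_gotzmann_family {k : Type*} [Field k] {n : ℕ}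
    (I : Ideal (MvPolynomial (Fin n) k))
    (hsf : IsSquarefreeMonomialIdeal I) (hG : IsGotzmannIdeal I) (d : ℕ) :
    IsGotzmannFamily (Finset.univ : Finset (Fin n)) d
      {A : Finset (Fin n) | A.card = d ∧ sqMonomial k A ∈ I} := by
  rw [← coe_sqSupportsUpTo_slice]
  refine ⟨fun A hA => ⟨subset_univ A, sized_slice hA⟩, fun ℬ hℬ hcard => ?_⟩
  obtain ⟨D', hD', hslices, hmin⟩ :=
    (isTruncatedUpperSet_sqSupportsUpTo I d).exists_upShadow_minimal
  obtain ⟨ℬ, rfl⟩ : ∃ ℬ' : Finset (Finset (Fin n)), ↑ℬ' = ℬ := ⟨ℬ.toFinite.toFinset, by simp⟩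
  rw [Set.ncard_coe_finset, Set.ncard_coe_finset] at hcard
  rw [upShadowIn_univ, upShadowIn_univ, Set.ncard_coe_finset, Set.ncard_coe_finset]
  exact (hsf.card_upShadow_le (hG d) hD' hslices).trans
    (hmin ℬ (fun B hB => (hℬ B hB).2) hcard.ge)
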